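/- For any tuple n ∈ Z_k of positive integers with hgt(n) = s ≥ 1, the sequence of strict blowdowns at the leftmost possible 1 (repeatedly) terminates after exactly s steps at the tuple u_{k-s} = (1,2,...,2,1) of length k - s. -/

import Mathlib

/-!
Let `hgtFormula n = |n| - 2(k - 1)`. A strict blowup raises it by at most one and it vanishes on
every `u_l`, so `hgt n ≥ hgtFormula n`. Conversely, let `n` be a positive element of `Z_k`. If it
has no interior `1`, then `[n₂, …, n_k] ≥ 1` with equality only for `(2, …, 2, 1)`, and
`n₁ = [n₂, …, n_k]⁻¹` forces `n = u_k`. Otherwise, around its leftmost interior `1` we have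
`n = (…, a, 1, c, …)` with `a, c ≥ 2` by admissibility; blowing this `1` down gives a positive
element of `Z_{k-1}` with `hgtFormula` one less, from which `n` is recovered by a strict blowup.
Induction on `k` shows that the leftmost blowdowns reach `u_{k-s}` after `s = hgtFormula n` steps,
and this path shows `hgt n = s`.
-/

/-- Hirzebruch–Jung continued fraction `[n₁,…,n_k] = n₁ - 1/(n₂ - 1/(⋯ - 1/n_k))`,
evaluated from the right (with the convention `(0 : ℚ)⁻¹ = 0`, so `hjcf [n] = n`). -/
def hjcf : List ℤ → ℚ
  | [] => 0
  | a :: l => (a : ℚ) - (hjcf l)⁻¹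

/-- A tuple is admissible if all intermediate denominators `[n_j,…,n_k]` (for `j ≥ 2`)
are positive. -/
def Admissible (l : List ℤ) : Prop :=
  ∀ j : ℕ, 1 ≤ j → j < l.length → 0 < hjcf (l.drop j)

/-- Strict blowup at the `j`-th term (1-indexed): for `j ≤ r-1` it maps
`(n₁,…,n_r)` to `(n₁,…,n_{j-1}, n_j+1, 1, n_{j+1}+1, …, n_r)`;
for `j = r` it maps `(n₁,…,n_r)` to `(n₁,…,n_{r-1}, n_r+1, 1)`. -/
def psi : ℕ → List ℤ → List ℤ
  | 0, l => l
  | 1, [] => []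
  | 1, [a] => [a + 1, 1]
  | 1, a :: b :: t => (a + 1) :: 1 :: (b + 1) :: t
  | _ + 2, [] => []
  | j + 2, a :: t => a :: psi (j + 1) t

/-- `ReachesIn s a b` : `b` is obtained from `a` by a sequence of `s` strict blowups. -/
inductive ReachesIn : ℕ → List ℤ → List ℤ → Prop
  | refl (l : List ℤ) : ReachesIn 0 l l
  | step {s : ℕ} {a b : List ℤ} (j : ℕ) (hj : 1 ≤ j) (hj' : j ≤ b.length) :
      ReachesIn s a b → ReachesIn (s + 1) a (psi j b)

/-- `uTuple l = (1,2,…,2,1)` of length `l ≥ 2`; `uTuple 1 = (0)`. -/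
def uTuple (l : ℕ) : List ℤ :=
  if l ≤ 1 then [0] else 1 :: (List.replicate (l - 2) 2 ++ [1])

/-- Height: the minimal number of strict blowups needed to reach `n` from some `uTuple l`. -/
noncomputable def hgt (n : List ℤ) : ℕ :=
  sInf {s | ∃ l : ℕ, 1 ≤ l ∧ ReachesIn s (uTuple l) n}

/-- Derived tuple ("new framings after handle slides"): `n'_k = n_k` and
`n'_i = n_i + n'_{i+1} - 2`. -/
def derived : List ℤ → List ℤ
  | [] => []
  | [a] => [a]
  | a :: b :: t => (a + (derived (b :: t)).headI - 2) :: derived (b :: t)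

/-- Strict blowdown at the `(j+1)`-st term (the left inverse of `psi j`): it deletes the
entry at the `(j+1)`-st position and subtracts 1 from each adjacent incremented entry. -/
def bd : ℕ → List ℤ → List ℤ
  | 0, l => l
  | 1, [] => []
  | 1, [a] => [a]
  | 1, [a, _] => [a - 1]
  | 1, a :: _ :: c :: t => (a - 1) :: (c - 1) :: t
  | _ + 2, [] => []
  | j + 2, a :: t => a :: bd (j + 1) t

/-- One strict blowdown at the leftmost possible `1` (an entry `1` not in the first
position); if there is none, do nothing. -/
def leftmostOneStep (l : List ℤ) : List ℤ :=
  match (l.drop 1).findIdx? (fun x => x == 1) with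
  | some i => bd (i + 1) l
  | none => l

@[simp] lemma hjcf_nil : hjcf [] = 0 := rfl

@[simp] lemma hjcf_cons (a : ℤ) (l : List ℤ) : hjcf (a :: l) = a - (hjcf l)⁻¹ := rfl

lemma hjcf_append_congr (p : List ℤ) {A B : List ℤ} (h : hjcf A = hjcf B) :
    hjcf (p ++ A) = hjcf (p ++ B) := by
  induction p with
  | nil => exact h
  | cons x p ih => simp only [List.cons_append, hjcf_cons, ih]

lemma hjcf_cons_sub_one (c : ℤ) (t : List ℤ) : hjcf ((c - 1) :: t) = hjcf (c :: t) - 1 := by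
  simp; ring

lemma hjcf_blowdown (a c : ℤ) (t : List ℤ) (hx : 1 < hjcf (c :: t)) :
    hjcf ((a - 1) :: (c - 1) :: t) = hjcf (a :: 1 :: c :: t) := by
  rw [hjcf_cons, hjcf_cons_sub_one, hjcf_cons a, hjcf_cons 1]
  generalize hjcf (c :: t) = x at hx ⊢
  have hx₀ : x ≠ 0 := by positivity
  have hx₁ : x - 1 ≠ 0 := by linarith
  push_cast
  field_simp
  ring

lemma admissible_cons_iff {a : ℤ} {l : List ℤ} :
    Admissible (a :: l) ↔ Admissible l ∧ (l ≠ [] → 0 < hjcf l) := by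
  constructor
  · intro h
    refine ⟨fun j hj hjl => h (j + 1) (by omega) (by simpa using hjl), fun hl => ?_⟩
    simpa using h 1 le_rfl (by simpa using List.length_pos_iff.mpr hl)
  · rintro ⟨hl, hl₀⟩ (_ | _ | j) hj hjl
    · omega
    · exact hl₀ (by rintro rfl; simp at hjl)
    · exact hl (j + 1) (by omega) (by simpa using hjl)

lemma Admissible.of_cons {a : ℤ} {l : List ℤ} (h : Admissible (a :: l)) : Admissible l :=
  (admissible_cons_iff.mp h).1

lemma Admissible.hjcf_tail_nonneg {a : ℤ} {l : List ℤ} (h : Admissible (a :: l)) :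
    0 ≤ hjcf l := by
  rcases eq_or_ne l [] with rfl | hl
  · simp
  · exact ((admissible_cons_iff.mp h).2 hl).le

lemma Admissible.of_append {p l : List ℤ} (h : Admissible (p ++ l)) : Admissible l := by
  induction p with
  | nil => exact h
  | cons x p ih => exact ih h.of_cons

lemma Admissible.hjcf_nonneg_of_append {p l : List ℤ} (h : Admissible (p ++ l))
    (h₀ : 0 ≤ hjcf (p ++ l)) : 0 ≤ hjcf l := by
  induction p with
  | nil => exact h₀
  | cons x p ih => exact ih h.of_cons h.hjcf_tail_nonneg

lemma Admissible.append_congr {p A B : List ℤ} (h : Admissible (p ++ A)) (hA : A ≠ [])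
    (hB : Admissible B) (hAB : hjcf A = hjcf B) : Admissible (p ++ B) := by
  induction p with
  | nil => exact hB
  | cons x p ih =>
    rw [List.cons_append] at h ⊢
    refine admissible_cons_iff.mpr ⟨ih h.of_cons, fun _ => ?_⟩
    rw [← hjcf_append_congr p hAB]
    exact (admissible_cons_iff.mp h).2 (by simp [hA])

lemma Admissible.cons_congr {a : ℤ} {l : List ℤ} (h : Admissible (a :: l)) (b : ℤ) :
    Admissible (b :: l) :=
  admissible_cons_iff.mpr (admissible_cons_iff.mp h)

lemma hjcf_one_cons (l : List ℤ) : hjcf (1 :: l) = 1 - (hjcf l)⁻¹ := by simp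

section InteriorOne

variable {a c : ℤ} {t : List ℤ}

lemma Admissible.one_lt_hjcf_after_one (h : Admissible (a :: 1 :: c :: t)) :
    1 < hjcf (c :: t) := by
  obtain ⟨h₁, h₁₀⟩ := admissible_cons_iff.mp h
  have hx₀ : 0 < hjcf (c :: t) := (admissible_cons_iff.mp h₁).2 (by simp)
  have : 0 < hjcf (1 :: c :: t) := h₁₀ (by simp)
  rw [hjcf_one_cons, sub_pos, inv_lt_one₀ hx₀] at this
  exact this

lemma Admissible.two_le_after_one (h : Admissible (a :: 1 :: c :: t)) : 2 ≤ c := by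
  have hx := h.one_lt_hjcf_after_one
  have ht := h.of_cons.of_cons.hjcf_tail_nonneg
  rw [hjcf_cons] at hx
  have : (1 : ℚ) < c := by linarith [inv_nonneg.mpr ht]
  exact_mod_cast this

-- `[1, c, …]` lies in `(0, 1)`, so `a = [a, 1, c, …] + [1, c, …]⁻¹ > 1`.
lemma Admissible.two_le_before_one (h : Admissible (a :: 1 :: c :: t))
    (h₀ : 0 ≤ hjcf (a :: 1 :: c :: t)) : 2 ≤ a := by
  have hx := h.one_lt_hjcf_after_one
  have hy₀ : 0 < hjcf (1 :: c :: t) := (admissible_cons_iff.mp h).2 (by simp)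
  have hy₁ : hjcf (1 :: c :: t) < 1 := by
    rw [hjcf_one_cons]
    linarith [inv_pos.mpr (zero_lt_one.trans hx)]
  rw [hjcf_cons] at h₀
  have : (1 : ℚ) < a := by linarith [one_lt_inv₀ hy₀ |>.mpr hy₁]
  exact_mod_cast this

end InteriorOne

/-- Positive tuples in `Z_k`. -/
structure IsPosZeroTuple (n : List ℤ) : Prop where
  pos : ∀ x ∈ n, 0 < x
  admissible : Admissible n
  hjcf_eq_zero : hjcf n = 0

lemma IsPosZeroTuple.blowdown {p t : List ℤ} {a c : ℤ}
    (h : IsPosZeroTuple (p ++ a :: 1 :: c :: t)) :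
    IsPosZeroTuple (p ++ (a - 1) :: (c - 1) :: t) := by
  have hadm := h.admissible.of_append
  have ha : 2 ≤ a :=
    hadm.two_le_before_one (h.admissible.hjcf_nonneg_of_append h.hjcf_eq_zero.ge)
  have hc : 2 ≤ c := hadm.two_le_after_one
  have hx := hadm.one_lt_hjcf_after_one
  have hcore := hjcf_blowdown a c t hx
  refine ⟨?_, ?_, ?_⟩
  · intro x hx
    simp only [List.mem_append, List.mem_cons] at hx
    rcases hx with hx | rfl | rfl | hx
    · exact h.pos x (by simp [hx])
    · omega
    · omega
    · exact h.pos x (by simp [hx])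
  · refine h.admissible.append_congr (by simp) ?_ hcore.symm
    refine admissible_cons_iff.mpr ⟨hadm.of_cons.of_cons.cons_congr _, fun _ => ?_⟩
    rw [hjcf_cons_sub_one]
    linarith
  · rw [hjcf_append_congr p hcore]
    exact h.hjcf_eq_zero

section NoInteriorOne

variable {q : List ℤ} {b : ℤ}

lemma one_le_hjcf_concat (hq : ∀ x ∈ q, 2 ≤ x) (hb : 1 ≤ b) : 1 ≤ hjcf (q ++ [b]) := by
  induction q with
  | nil => simpa using (Int.cast_le (R := ℚ)).mpr hb
  | cons x q ih =>
    have hx : (2 : ℚ) ≤ x := by exact_mod_cast hq x (by simp)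
    have hy := ih fun y hy => hq y (by simp [hy])
    rw [List.cons_append, hjcf_cons]
    linarith [inv_le_one_of_one_le₀ hy]

lemma eq_replicate_of_hjcf_concat_eq_one (hq : ∀ x ∈ q, 2 ≤ x) (hb : 1 ≤ b)
    (h : hjcf (q ++ [b]) = 1) : q = List.replicate q.length 2 ∧ b = 1 := by
  induction q with
  | nil => exact ⟨rfl, by exact_mod_cast (by simpa using h : (b : ℚ) = 1)⟩
  | cons x q ih =>
    have hq' : ∀ y ∈ q, 2 ≤ y := fun y hy => hq y (by simp [hy])
    have hx : (2 : ℚ) ≤ x := by exact_mod_cast hq x (by simp)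
    have hy := one_le_hjcf_concat hq' hb
    rw [List.cons_append, hjcf_cons] at h
    have hinv := inv_le_one_of_one_le₀ hy
    have hy₁ : hjcf (q ++ [b]) = 1 := inv_eq_one.mp (by linarith)
    obtain ⟨hrep, rfl⟩ := ih hq' hy₁
    have hx₂ : x = 2 := by exact_mod_cast (by linarith : (x : ℚ) = 2)
    exact ⟨by rw [hx₂, List.length_cons, List.replicate_succ, ← hrep], rfl⟩

lemma IsPosZeroTuple.eq_uTuple {a : ℤ} (h : IsPosZeroTuple (a :: (q ++ [b]))) (hq : 1 ∉ q) :
    a :: (q ++ [b]) = uTuple (q.length + 2) := by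
  have hq₂ : ∀ x ∈ q, 2 ≤ x := fun x hx =>
    have := h.pos x (by simp [hx])
    have : x ≠ 1 := fun h₁ => hq (h₁ ▸ hx)
    by omega
  have hb : 1 ≤ b := h.pos b (by simp)
  have ha : (1 : ℚ) ≤ a := by exact_mod_cast h.pos a (by simp)
  have hy := one_le_hjcf_concat hq₂ hb
  have hcf := h.hjcf_eq_zero
  rw [hjcf_cons] at hcf
  have hinv := inv_le_one_of_one_le₀ hy
  obtain ⟨hrep, rfl⟩ :=
    eq_replicate_of_hjcf_concat_eq_one hq₂ hb (inv_eq_one.mp (by linarith))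
  have ha₁ : a = 1 := by exact_mod_cast (by linarith : (a : ℚ) = 1)
  rw [ha₁, uTuple, if_neg (by omega), Nat.add_sub_cancel, ← hrep]

end NoInteriorOne

lemma bd_append (p t : List ℤ) (a x c : ℤ) :
    bd (p.length + 1) (p ++ a :: x :: c :: t) = p ++ (a - 1) :: (c - 1) :: t := by
  induction p with
  | nil => rfl
  | cons y p ih => exact congrArg (y :: ·) ih

lemma psi_append (p t : List ℤ) (a c : ℤ) :
    psi (p.length + 1) (p ++ a :: c :: t) = p ++ (a + 1) :: 1 :: (c + 1) :: t := by
  induction p with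
  | nil => rfl
  | cons y p ih => exact congrArg (y :: ·) ih

lemma leftmostOneStep_eq_bd {a : ℤ} {q r : List ℤ} (hq : 1 ∉ q) :
    leftmostOneStep (a :: (q ++ 1 :: r)) = bd (q.length + 1) (a :: (q ++ 1 :: r)) := by
  have hfind : (q ++ 1 :: r).findIdx? (fun x => x == 1) = some q.length := by
    have : q.findIdx? (fun x => x == 1) = none :=
      List.findIdx?_eq_none_iff.mpr fun x hx => by simpa using ne_of_mem_of_not_mem hx hq
    simp [List.findIdx?_append, List.findIdx?_cons, this]
  simp only [leftmostOneStep, List.drop_succ_cons, List.drop_zero, hfind]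

lemma IsPosZeroTuple.eq_uTuple_or_exists_blowdown {n : List ℤ} (h : IsPosZeroTuple n)
    (hne : n ≠ []) :
    n = uTuple n.length ∨ ∃ p a c t, n = p ++ a :: 1 :: c :: t ∧
      leftmostOneStep n = p ++ (a - 1) :: (c - 1) :: t := by
  obtain ⟨a₀, m, rfl⟩ := List.exists_cons_of_ne_nil hne
  have hm : m ≠ [] := by
    rintro rfl
    have := h.pos a₀ (by simp)
    have := h.hjcf_eq_zero
    simp_all
  obtain ⟨q, b, rfl⟩ : ∃ q b, m = q ++ [b] :=
    ⟨m.dropLast, m.getLast hm, (List.dropLast_append_getLast hm).symm⟩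
  by_cases h₁ : 1 ∈ q
  · right
    obtain ⟨q₁, r, rfl, hq₁⟩ := List.eq_append_cons_of_mem h₁
    obtain ⟨c, t, hct⟩ := List.exists_cons_of_ne_nil (List.append_ne_nil_of_right_ne_nil r
      (List.cons_ne_nil b []))
    obtain ⟨p, a, hpa⟩ : ∃ p a, a₀ :: q₁ = p ++ [a] :=
      ⟨(a₀ :: q₁).dropLast, (a₀ :: q₁).getLast (by simp),
        (List.dropLast_append_getLast _).symm⟩
    have hlen : q₁.length = p.length := by simpa using congrArg List.length hpa
    have hn : a₀ :: (q₁ ++ 1 :: c :: t) = p ++ a :: 1 :: c :: t := by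
      rw [← List.cons_append, hpa]
      simp
    rw [List.append_assoc, List.cons_append, hct]
    refine ⟨p, a, c, t, hn, ?_⟩
    rw [leftmostOneStep_eq_bd hq₁, hn, hlen, bd_append]
  · left
    simpa using h.eq_uTuple h₁

/-- The paper's formula `|n| - 2(k - 1)` for the height. -/
def hgtFormula (n : List ℤ) : ℤ := n.sum - 2 * ((n.length : ℤ) - 1)

@[simp] lemma hgtFormula_nil : hgtFormula [] = 2 := by simp [hgtFormula]

@[simp] lemma hgtFormula_cons (a : ℤ) (l : List ℤ) :
    hgtFormula (a :: l) = a - 2 + hgtFormula l := by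
  simp [hgtFormula]
  ring

lemma hgtFormula_uTuple (l : ℕ) : hgtFormula (uTuple l) = 0 := by
  unfold uTuple
  split_ifs with hl
  · simp
  · simp [hgtFormula, List.sum_replicate]
    push_cast [Nat.cast_sub (by omega : 2 ≤ l)]
    ring

lemma hgtFormula_psi_le (j : ℕ) (b : List ℤ) : hgtFormula (psi j b) ≤ hgtFormula b + 1 := by
  fun_induction psi j b <;> simp_all <;> linarith

lemma length_le_length_psi (j : ℕ) (b : List ℤ) : b.length ≤ (psi j b).length := by
  fun_induction psi j b <;> simp_all

lemma ReachesIn.hgtFormula_le {s : ℕ} {a b : List ℤ} (h : ReachesIn s a b) :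
    hgtFormula b ≤ hgtFormula a + s := by
  induction h with
  | refl => simp
  | @step _ _ b j _ _ _ ih => push_cast; linarith [hgtFormula_psi_le j b]

lemma ReachesIn.length_le {s : ℕ} {a b : List ℤ} (h : ReachesIn s a b) :
    a.length ≤ b.length := by
  induction h with
  | refl => rfl
  | @step _ _ b j _ _ _ ih => exact ih.trans (length_le_length_psi j b)

lemma hgt_nil : hgt [] = 0 := by
  suffices h : {s | ∃ l : ℕ, 1 ≤ l ∧ ReachesIn s (uTuple l) []} = ∅ by
    rw [hgt, h, Nat.sInf_empty]
  refine Set.eq_empty_of_forall_notMem fun s ⟨l, _, hr⟩ => ?_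
  have := hr.length_le
  unfold uTuple at this
  split_ifs at this <;> simp at this

lemma hgt_eq_of_reachesIn {n : List ℤ} {s l : ℕ} (hr : ReachesIn s (uTuple l) n) (hl : 1 ≤ l)
    (hs : hgtFormula n = s) : hgt n = s := by
  refine le_antisymm (Nat.sInf_le ⟨l, hl, hr⟩) (le_csInf ⟨s, l, hl, hr⟩ ?_)
  rintro s' ⟨l', -, hr'⟩
  have := hr'.hgtFormula_le
  rw [hgtFormula_uTuple] at this
  omega

theorem IsPosZeroTuple.reduces_to_uTuple {n : List ℤ} (h : IsPosZeroTuple n) (hne : n ≠ []) :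
    ∃ s l, 1 ≤ l ∧ l + s = n.length ∧ hgtFormula n = s ∧ ReachesIn s (uTuple l) n ∧
      leftmostOneStep^[s] n = uTuple l := by
  induction hk : n.length generalizing n with
  | zero => exact absurd (List.eq_nil_of_length_eq_zero hk) hne
  | succ k ih =>
    rcases h.eq_uTuple_or_exists_blowdown hne with hu | ⟨p, a, c, t, rfl, hstep⟩
    · refine ⟨0, k + 1, by omega, rfl, ?_, ?_, ?_⟩
      · rw [hu, hgtFormula_uTuple]; rfl
      · rw [← hk, ← hu]; exact ReachesIn.refl n
      · rw [← hk, ← hu]; rfl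
    · obtain ⟨s, l, hl, hls, hH, hr, hiter⟩ :=
        ih h.blowdown (by simp) (by simp at hk ⊢; omega)
      refine ⟨s + 1, l, hl, by omega, ?_, ?_, ?_⟩
      · simp only [hgtFormula, List.sum_append, List.sum_cons, List.length_append,
          List.length_cons] at hH ⊢
        push_cast at hH ⊢
        linarith
      · have := ReachesIn.step (p.length + 1) (by omega) (by simp) hr
        rwa [psi_append, sub_add_cancel, sub_add_cancel] at this
      · rw [Function.iterate_succ_apply, hstep, hiter]

/-- For a positive tuple `n ∈ Z_k` with `hgt n = s ≥ 1`, the sequence of strict blowdowns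
at the leftmost possible `1` terminates after exactly `s` steps at `u_{k-s}`. -/
theorem leftmost_blowdown_seq (n : List ℤ) (s : ℕ)
    (hpos : ∀ x ∈ n, 0 < x) (hadm : Admissible n) (hcf : hjcf n = 0)
    (hhgt : hgt n = s) (hs : 1 ≤ s) :
    leftmostOneStep^[s] n = uTuple (n.length - s) := by
  have hne : n ≠ [] := by
    rintro rfl
    rw [hgt_nil] at hhgt
    omega
  obtain ⟨s', l, hl, hls, hH, hr, hiter⟩ :=
    IsPosZeroTuple.reduces_to_uTuple ⟨hpos, hadm, hcf⟩ hne
  obtain rfl : s' = s := (hgt_eq_of_reachesIn hr hl hH).symm.trans hhgt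
  rw [hiter, ← hls, Nat.add_sub_cancel]
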